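/- Consider the two-term chain complex 0 → V --Δ--> V⊗V → 0 with V in degree 0. Its degree-0 cohomology Ker(Δ) is zero, and its degree-1 cohomology Coker(Δ) is a free abelian group of rank 2, isomorphic to V as an abelian group. -/

import Mathlib

open TensorProduct

noncomputable section

abbrev V : Type := ℤ × ℤ

def e1 : V := (1, 0)
def eX : V := (0, 1)

def mulB : V →ₗ[ℤ] V →ₗ[ℤ] V :=
  LinearMap.mk₂ ℤ (fun x y => (x.1 * y.1, x.1 * y.2 + x.2 * y.1))
    (fun x x' y => by ext <;> simp <;> ring)
    (fun r x y => by ext <;> simp <;> ring)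
    (fun x y y' => by ext <;> simp <;> ring)
    (fun r x y => by ext <;> simp <;> ring)

def mV : V ⊗[ℤ] V →ₗ[ℤ] V := TensorProduct.lift mulB

def ΔV : V →ₗ[ℤ] V ⊗[ℤ] V :=
  (LinearMap.fst ℤ ℤ ℤ).smulRight (e1 ⊗ₜ[ℤ] eX + eX ⊗ₜ[ℤ] e1) +
  (LinearMap.snd ℤ ℤ ℤ).smulRight (eX ⊗ₜ[ℤ] eX)

def εV : V →ₗ[ℤ] ℤ := LinearMap.snd ℤ ℤ ℤ
def ιV : ℤ →ₗ[ℤ] V := LinearMap.inl ℤ ℤ ℤ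

/-!
`V` is the ring `ℤ[X]/(X²)` (multiplication `mV`, `e1 = 1`, `eX = X`, counit `εV`). With `σ` the
involution `X ↦ -X`, the map `μ(a ⊗ b) = σ(a) b` kills `Δ(1) = 1 ⊗ X + X ⊗ 1` and `Δ(X) = X ⊗ X`,
and the counit retraction `ε ⊗ id` of `Δ` and the section `b ↦ 1 ⊗ b` of `μ` satisfy
`Δ((ε ⊗ id) t) + 1 ⊗ μ(t) = t`. So `0 → V → V ⊗ V → V → 0` is split exact: `Δ` is injective and
`Coker Δ ≅ V`.
-/

theorem LinearMap.exact_of_apply_eq_zero_of_add_eq_self {R M N P : Type*} [Semiring R]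
    [AddCommMonoid M] [AddCommMonoid N] [AddCommMonoid P] [Module R M] [Module R N] [Module R P]
    {f : M →ₗ[R] N} {g : N →ₗ[R] P} (r : N → M) (s : P →ₗ[R] N)
    (hgf : ∀ x, g (f x) = 0) (hid : ∀ y, f (r y) + s (g y) = y) :
    Function.Exact f g :=
  exact_of_comp_of_mem_range (ext hgf) fun y hy => ⟨r y, by simpa [hy] using hid y⟩

def conjV : V →ₗ[ℤ] V := LinearMap.prodMap LinearMap.id (-LinearMap.id)

def counitLeftV : V ⊗[ℤ] V →ₗ[ℤ] V := (TensorProduct.lid ℤ V).toLinearMap ∘ₗ εV.rTensor V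

def conjMulV : V ⊗[ℤ] V →ₗ[ℤ] V := mV ∘ₗ conjV.rTensor V

theorem ΔV_apply (v : V) : ΔV v = v.1 • (e1 ⊗ₜ eX + eX ⊗ₜ e1) + v.2 • (eX ⊗ₜ eX) := rfl

theorem counitLeftV_tmul (x y : V) : counitLeftV (x ⊗ₜ y) = x.2 • y := rfl

theorem conjMulV_tmul (x y : V) : conjMulV (x ⊗ₜ y) = (x.1 * y.1, x.1 * y.2 - x.2 * y.1) := by
  change ((x.1 * y.1, x.1 * y.2 + -x.2 * y.1) : V) = _
  ext <;> simp only [neg_mul, ← sub_eq_add_neg]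

theorem counitLeftV_ΔV (v : V) : counitLeftV (ΔV v) = v := by
  rw [ΔV_apply]
  simp only [map_add, map_smul, counitLeftV_tmul, e1, eX]
  ext <;> simp

theorem conjMulV_ΔV (v : V) : conjMulV (ΔV v) = 0 := by
  rw [ΔV_apply]
  simp only [map_add, map_smul, conjMulV_tmul, e1, eX]
  ext <;> simp

theorem conjMulV_e1_tmul (v : V) : conjMulV (e1 ⊗ₜ v) = v := by
  simp [conjMulV_tmul, e1]

theorem ΔV_counitLeftV_add_e1_tmul_conjMulV (t : V ⊗[ℤ] V) :
    ΔV (counitLeftV t) + e1 ⊗ₜ conjMulV t = t := by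
  induction t using TensorProduct.induction_on with
  | zero => simp
  | add t u ht hu => rw [map_add, map_add, map_add, tmul_add, add_add_add_comm, ht, hu]
  | tmul x y =>
    have basis (a b : ℤ) : ((a, b) : V) = a • e1 + b • eX := by ext <;> simp [e1, eX]
    obtain ⟨a, b⟩ := x
    obtain ⟨c, d⟩ := y
    rw [counitLeftV_tmul, map_smul, ΔV_apply, conjMulV_tmul]
    dsimp only
    rw [basis (a * c), basis a, basis c]
    simp only [tmul_add, add_tmul, tmul_smul, ← smul_tmul', smul_add]
    module

/-- For the complex `0 → V --Δ--> V⊗V → 0` (with `V` in degree 0), the degree-0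
cohomology `Ker(Δ)` vanishes and the degree-1 cohomology `Coker(Δ)` is free abelian
of rank 2, isomorphic to `V` as an abelian group. -/
theorem cohomology_of_comult_complex :
    LinearMap.ker ΔV = ⊥ ∧
    Nonempty (((V ⊗[ℤ] V) ⧸ LinearMap.range ΔV) ≃ₗ[ℤ] V) := by
  have hexact : Function.Exact ΔV conjMulV :=
    LinearMap.exact_of_apply_eq_zero_of_add_eq_self counitLeftV (TensorProduct.mk ℤ V V e1)
      conjMulV_ΔV ΔV_counitLeftV_add_e1_tmul_conjMulV
  exact ⟨LinearMap.ker_eq_bot.mpr (Function.LeftInverse.injective counitLeftV_ΔV),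
    ⟨hexact.linearEquivOfSurjective fun v => ⟨e1 ⊗ₜ v, conjMulV_e1_tmul v⟩⟩⟩
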